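/- For every regular uncountable κ, if λ is a cardinal with κ < λ < 𝔰_κ and M ≺ H(θ) has λ ⊆ M and |M| = λ, then there exists A* ∈ [κ]^κ such that for every x ∈ M ∩ P(κ), either A* ⊆* x or A* ⊆* (κ \ x); moreover the resulting filter D = {x ⊆ κ : A* ⊆* x} is a κ-complete filter on κ all of whose members have cardinality κ, containing every co-bounded subset of κ. -/

import Mathlib

open Cardinal

/-- The splitting number `𝔰_κ`. -/
noncomputable def splittingNumber (κ : Cardinal) : Cardinal :=
  sInf {c | ∃ F : Set (Set κ.ord.ToType), #↥F = c ∧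
    ∀ b : Set κ.ord.ToType, #↥b = κ →
      ∃ a ∈ F, #↥(b ∩ a) = κ ∧ #↥(b \ a) = κ}

/-!
`M` has fewer than `𝔰_κ` members, so it is not a splitting family: some `A ∈ [κ]^κ` is split by
no `x ∈ M`, i.e. `A ⊆* x` or `A ⊆* κ \ x`. The filter of sets almost containing `A` is then
`κ`-complete by regularity of `κ` (a union of fewer than `κ` sets of size `< κ` has size `< κ`),
its members are large because `A` is, and it contains the final segments `(δ, κ)` because
initial segments of `κ` are small.
-/

namespace Cardinal

universe u

variable {α : Type u} {κ : Cardinal.{u}} {A : Set α}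

theorem mk_set_ord_toType_le (x : Set κ.ord.ToType) : #x ≤ κ :=
  (mk_set_le x).trans_eq (mk_ord_toType κ)

theorem mk_inter_eq_of_mk_diff_lt (hκ : ℵ₀ ≤ κ) (hA : #A = κ) {x : Set α}
    (hx : #↥(A \ x) < κ) : #↥(A ∩ x) = κ := by
  refine le_antisymm (hA ▸ mk_le_mk_of_subset Set.inter_subset_left) (not_lt.1 fun hlt ↦ ?_)
  have hcover : #A ≤ #↥(A \ x) + #↥(A ∩ x) := by
    conv_lhs => rw [← Set.sdiff_union_inter A x]
    exact mk_union_le _ _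
  exact (hA ▸ hcover).not_gt (add_lt_of_lt hκ hx hlt)

theorem mk_diff_iInter_lt_of_isRegular (hκ : κ.IsRegular) {ι : Type u} (s : ι → Set α)
    (hι : #ι < κ) (hs : ∀ i, #↥(A \ s i) < κ) : #↥(A \ ⋂ i, s i) < κ := by
  rw [Set.sdiff_iInter]
  exact (card_iUnion_lt_iff_forall_of_isRegular hκ hι).2 hs

theorem mk_Iic_ord_toType_lt (hκ : ℵ₀ ≤ κ) (δ : κ.ord.ToType) : #(Set.Iic δ) < κ := by
  simpa using mk_Iic_lt δ (by simp) (by simpa using hκ)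

end Cardinal

theorem exists_unsplit_of_mk_lt_splittingNumber {κ : Cardinal} (M : Set (Set κ.ord.ToType))
    (hM : #M < splittingNumber κ) :
    ∃ A : Set κ.ord.ToType, #A = κ ∧ ∀ x ∈ M, #↥(A \ x) < κ ∨ #↥(A ∩ x) < κ := by
  by_contra! hsplit
  refine hM.not_ge (csInf_le' ⟨M, rfl, fun b hb ↦ ?_⟩)
  obtain ⟨x, hx, hdiff, hinter⟩ := hsplit b hb
  exact ⟨x, hx, hinter.antisymm' (mk_set_ord_toType_le _),
    hdiff.antisymm' (mk_set_ord_toType_le _)⟩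

theorem stmt_19_general (κ lam : Cardinal) (hreg : κ.IsRegular)
    (hls : lam < splittingNumber κ)
    (M : Set (Set κ.ord.ToType)) (hM : #↥M = lam) :
    ∃ A : Set κ.ord.ToType, #↥A = κ ∧
      (∀ x ∈ M, #↥(A \ x) < κ ∨ #↥(A ∩ x) < κ) ∧
      (Set.univ ∈ {x : Set κ.ord.ToType | #↥(A \ x) < κ}) ∧
      (∀ x y : Set κ.ord.ToType, #↥(A \ x) < κ → x ⊆ y → #↥(A \ y) < κ) ∧
      (∀ (ι : Type) (s : ι → Set κ.ord.ToType), #ι < κ →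
        (∀ i, #↥(A \ s i) < κ) → #↥(A \ ⋂ i, s i) < κ) ∧
      (∀ x : Set κ.ord.ToType, #↥(A \ x) < κ → #↥x = κ) ∧
      (∀ δ : κ.ord.ToType, #↥(A \ Set.Ioi δ) < κ) := by
  obtain ⟨A, hA, hunsplit⟩ := exists_unsplit_of_mk_lt_splittingNumber M (hM ▸ hls)
  refine ⟨A, hA, hunsplit, by simpa using hreg.pos, fun x y hx hxy ↦ ?_,
    fun ι s hι ↦ mk_diff_iInter_lt_of_isRegular hreg s hι, fun x hx ↦ ?_, fun δ ↦ ?_⟩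
  · exact (mk_le_mk_of_subset (Set.sdiff_subset_sdiff_right hxy)).trans_lt hx
  · exact (mk_set_ord_toType_le x).antisymm
      ((mk_inter_eq_of_mk_diff_lt hreg.aleph0_le hA hx).ge.trans
        (mk_le_mk_of_subset Set.inter_subset_right))
  · have hsub : A \ Set.Ioi δ ⊆ Set.Iic δ := fun _ ha ↦ Set.mem_Iic.2 (not_lt.1 ha.2)
    exact (mk_le_mk_of_subset hsub).trans_lt (mk_Iic_ord_toType_lt hreg.aleph0_le δ)

/-- if `κ` is regular uncountable, `κ < λ < 𝔰_κ`, and `M` (modelled by its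
trace on `𝒫(κ)`) has cardinality `λ`, then there is `A* ∈ [κ]^κ` unsplit by every
`x ∈ M ∩ 𝒫(κ)` (i.e. `A* ⊆* x` or `A* ⊆* κ \ x`, where `a ⊆* b` means `|a \ b| < κ`);
moreover `D = {x : A* ⊆* x}` is a κ-complete filter all of whose members have
cardinality `κ`, containing every co-bounded subset of `κ`. -/
theorem stmt_19 (κ lam : Cardinal) (hreg : κ.IsRegular) (hκ : ℵ₀ < κ)
    (hκl : κ < lam) (hls : lam < splittingNumber κ)
    (M : Set (Set κ.ord.ToType)) (hM : #↥M = lam) :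
    ∃ A : Set κ.ord.ToType, #↥A = κ ∧
      (∀ x ∈ M, #↥(A \ x) < κ ∨ #↥(A ∩ x) < κ) ∧
      (Set.univ ∈ {x : Set κ.ord.ToType | #↥(A \ x) < κ}) ∧
      (∀ x y : Set κ.ord.ToType, #↥(A \ x) < κ → x ⊆ y → #↥(A \ y) < κ) ∧
      (∀ (ι : Type) (s : ι → Set κ.ord.ToType), #ι < κ →
        (∀ i, #↥(A \ s i) < κ) → #↥(A \ ⋂ i, s i) < κ) ∧
      (∀ x : Set κ.ord.ToType, #↥(A \ x) < κ → #↥x = κ) ∧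
      (∀ δ : κ.ord.ToType, #↥(A \ Set.Ioi δ) < κ) :=
  stmt_19_general κ lam hreg hls M hM
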